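/- Let α < β be real numbers, ω < 0, λ₀ ∈ ℝ and C > 0. Suppose that for every λ ≤ λ₀ there is a twice continuously differentiable function L_λ : [α,β] → ℝ with L_λ > 0 on [α,β], −L_λ''(x) = λ L_λ(x) + ω L_λ(x)² on [α,β], and L_λ(α) ≤ C, L_λ(β) ≤ C. Let φ(x) = sin(π(x − α)/(β − α)). Then ∫_α^β L_λ(x) φ(x) dx → 0 as λ → −∞. -/

import Mathlib

/-!
Test the equation against `φ = sin (k (x - α))`, `k = π / (β - α)`. Green's identity gives
`∫ (L'' φ - L φ'') = k (L α + L β) ≤ 2 C k`, while the equation and `φ'' = -k² φ` turn the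
integrand into `(k² - λ) L φ - ω L² φ ≥ (k² - λ) L φ`. Hence `0 ≤ ∫ L φ ≤ 2 C k / (k² - λ)`,
which tends to `0` as `λ → -∞`.
-/

open Real Set Filter

noncomputable def dirichletMode (a b x : ℝ) : ℝ := sin (π * (x - a) / (b - a))

section DirichletMode

variable (a b : ℝ)

theorem hasDerivAt_dirichletMode (x : ℝ) :
    HasDerivAt (dirichletMode a b) (π / (b - a) * cos (π * (x - a) / (b - a))) x := by
  have h := (((hasDerivAt_id' x).sub_const a).const_mul π).div_const (b - a)
  exact h.sin.congr_deriv (by ring)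

theorem hasDerivAt_deriv_dirichletMode (x : ℝ) :
    HasDerivAt (fun x => π / (b - a) * cos (π * (x - a) / (b - a)))
      (-(π / (b - a)) ^ 2 * dirichletMode a b x) x := by
  have h := (((hasDerivAt_id' x).sub_const a).const_mul π).div_const (b - a)
  exact (h.cos.const_mul (π / (b - a))).congr_deriv (by rw [dirichletMode]; ring)

theorem continuous_dirichletMode : Continuous (dirichletMode a b) :=
  continuous_iff_continuousAt.2 fun x => (hasDerivAt_dirichletMode a b x).continuousAt

theorem dirichletMode_left : dirichletMode a b a = 0 := by
  simp [dirichletMode]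

theorem dirichletMode_right (hab : a ≠ b) : dirichletMode a b b = 0 := by
  rw [dirichletMode, mul_div_assoc, div_self (sub_ne_zero.2 hab.symm), mul_one, sin_pi]

theorem dirichletMode_nonneg {x : ℝ} (hx : x ∈ Icc a b) : 0 ≤ dirichletMode a b x := by
  obtain ⟨hax, hxb⟩ := hx
  rcases (hax.trans hxb).eq_or_lt with rfl | hab
  · simp [dirichletMode]
  · have hba : 0 < b - a := sub_pos.mpr hab
    apply sin_nonneg_of_nonneg_of_le_pi (by positivity)
    rw [div_le_iff₀ hba]
    exact mul_le_mul_of_nonneg_left (by linarith) pi_pos.le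

end DirichletMode

theorem integral_deriv2_mul_sub_mul_deriv2 {a b : ℝ} (hab : a ≤ b)
    {u u' u'' v v' v'' : ℝ → ℝ}
    (hu : ∀ x ∈ Icc a b, HasDerivWithinAt u (u' x) (Icc a b) x)
    (hu' : ∀ x ∈ Icc a b, HasDerivWithinAt u' (u'' x) (Icc a b) x)
    (hv : ∀ x ∈ Icc a b, HasDerivWithinAt v (v' x) (Icc a b) x)
    (hv' : ∀ x ∈ Icc a b, HasDerivWithinAt v' (v'' x) (Icc a b) x)
    (hu''c : ContinuousOn u'' (Icc a b)) (hv''c : ContinuousOn v'' (Icc a b)) :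
    ∫ x in a..b, (u'' x * v x - u x * v'' x) =
      (u' b * v b - u b * v' b) - (u' a * v a - u a * v' a) := by
  have cont {f f' : ℝ → ℝ} (hf : ∀ x ∈ Icc a b, HasDerivWithinAt f (f' x) (Icc a b) x) :
      ContinuousOn f (Icc a b) := fun x hx => (hf x hx).continuousWithinAt
  apply intervalIntegral.integral_eq_sub_of_hasDerivAt_of_le
    (f := fun x => u' x * v x - u x * v' x) hab
  · exact ((cont hu').mul (cont hv)).sub ((cont hu).mul (cont hv'))
  · intro x hx
    have hI : Icc a b ∈ nhds x := Icc_mem_nhds hx.1 hx.2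
    have hx' := Ioo_subset_Icc_self hx
    refine (((hu' x hx').hasDerivAt hI).mul ((hv x hx').hasDerivAt hI)).sub
      (((hu x hx').hasDerivAt hI).mul ((hv' x hx').hasDerivAt hI)) |>.congr_deriv ?_
    ring
  · exact ((hu''c.mul (cont hv)).sub ((cont hu).mul hv''c)).intervalIntegrable_of_Icc hab

theorem sub_mul_integral_mul_dirichletMode_le {a b ω lam : ℝ} (hab : a < b) (hω : ω ≤ 0)
    {u u' u'' : ℝ → ℝ}
    (hu : ∀ x ∈ Icc a b, HasDerivWithinAt u (u' x) (Icc a b) x)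
    (hu' : ∀ x ∈ Icc a b, HasDerivWithinAt u' (u'' x) (Icc a b) x)
    (hu''c : ContinuousOn u'' (Icc a b))
    (hsol : ∀ x ∈ Icc a b, -(u'' x) = lam * u x + ω * u x ^ 2) :
    ((π / (b - a)) ^ 2 - lam) * ∫ x in a..b, u x * dirichletMode a b x ≤
      π / (b - a) * (u a + u b) := by
  have hkba : π * (b - a) / (b - a) = π := by field_simp [(sub_pos.2 hab).ne']
  have hucont : ContinuousOn u (Icc a b) := fun x hx => (hu x hx).continuousWithinAt
  have hφ : ContinuousOn (dirichletMode a b) (Icc a b) :=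
    (continuous_dirichletMode a b).continuousOn
  have green := integral_deriv2_mul_sub_mul_deriv2 hab.le hu hu'
    (fun x _ => (hasDerivAt_dirichletMode a b x).hasDerivWithinAt)
    (fun x _ => (hasDerivAt_deriv_dirichletMode a b x).hasDerivWithinAt) hu''c
    (continuousOn_const.mul hφ)
  simp only [dirichletMode_left, dirichletMode_right a b hab.ne, sub_self, mul_zero, zero_div,
    cos_zero, hkba, cos_pi] at green
  rw [← intervalIntegral.integral_const_mul]
  calc ∫ x in a..b, ((π / (b - a)) ^ 2 - lam) * (u x * dirichletMode a b x)
      ≤ ∫ x in a..b,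
          (u'' x * dirichletMode a b x - u x * (-(π / (b - a)) ^ 2 * dirichletMode a b x)) := by
        refine intervalIntegral.integral_mono_on hab.le ?_ ?_ fun x hx => ?_
        · exact (continuousOn_const.mul (hucont.mul hφ)).intervalIntegrable_of_Icc hab.le
        · exact ((hu''c.mul hφ).sub
            (hucont.mul (continuousOn_const.mul hφ))).intervalIntegrable_of_Icc hab.le
        · have hux : u'' x = -(lam * u x + ω * u x ^ 2) := by linarith [hsol x hx]
          rw [hux]
          nlinarith [mul_nonneg (mul_nonneg (neg_nonneg.2 hω) (sq_nonneg (u x)))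
            (dirichletMode_nonneg a b hx)]
    _ = π / (b - a) * (u a + u b) := by rw [green]; ring

theorem stmt_19_general (α β ω lam₀ C : ℝ) (hab : α < β) (hω : ω < 0)
    (L : ℝ → ℝ → ℝ)
    (h : ∀ lam ≤ lam₀, ∃ L' L'' : ℝ → ℝ,
      (∀ x ∈ Icc α β, HasDerivWithinAt (L lam) (L' x) (Icc α β) x) ∧
      (∀ x ∈ Icc α β, HasDerivWithinAt L' (L'' x) (Icc α β) x) ∧
      ContinuousOn L'' (Icc α β) ∧
      (∀ x ∈ Icc α β, 0 < L lam x) ∧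
      (∀ x ∈ Icc α β, -(L'' x) = lam * L lam x + ω * L lam x ^ 2) ∧
      L lam α ≤ C ∧ L lam β ≤ C) :
    Filter.Tendsto
      (fun lam => ∫ x in α..β, L lam x * Real.sin (Real.pi * (x - α) / (β - α)))
      Filter.atBot (nhds 0) := by
  set k := π / (β - α)
  have hk : 0 < k := div_pos pi_pos (sub_pos.2 hab)
  have hbounds : ∀ lam ≤ lam₀, lam < k ^ 2 →
      0 ≤ ∫ x in α..β, L lam x * dirichletMode α β x ∧
      ∫ x in α..β, L lam x * dirichletMode α β x ≤ 2 * C * k / (k ^ 2 - lam) := by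
    intro lam hlam₀ hlam
    obtain ⟨L', L'', hL, hL', hL''c, hpos, hsol, hCα, hCβ⟩ := h lam hlam₀
    refine ⟨intervalIntegral.integral_nonneg hab.le fun x hx =>
      mul_nonneg (hpos x hx).le (dirichletMode_nonneg α β hx), ?_⟩
    rw [le_div_iff₀ (sub_pos.2 hlam), mul_comm]
    calc _ ≤ k * (L lam α + L lam β) :=
          sub_mul_integral_mul_dirichletMode_le hab hω.le hL hL' hL''c hsol
      _ ≤ 2 * C * k := by nlinarith
  have hupper : Tendsto (fun lam => 2 * C * k / (k ^ 2 - lam)) atBot (nhds 0) :=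
    tendsto_const_nhds.div_atTop <| tendsto_atTop_add_const_left _ _ tendsto_neg_atBot_atTop
  have hevent := (eventually_le_atBot lam₀).and (eventually_lt_atBot (k ^ 2))
  exact tendsto_of_tendsto_of_tendsto_of_le_of_le' tendsto_const_nhds hupper
    (hevent.mono fun lam hlam => (hbounds lam hlam.1 hlam.2).1)
    (hevent.mono fun lam hlam => (hbounds lam hlam.1 hlam.2).2)

/-- Let `α < β`, `ω < 0`, `λ₀ ∈ ℝ`, `C > 0`, and suppose that for every `λ ≤ λ₀` the
function `L λ` is a positive twice continuously differentiable solution of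
`-L'' = λL + ωL²` on `[α,β]` with `L λ α ≤ C` and `L λ β ≤ C`. Then, with
`φ(x) = sin(π(x−α)/(β−α))`, `∫_α^β L λ φ → 0` as `λ → −∞`. -/
theorem stmt_19 (α β ω lam₀ C : ℝ) (hab : α < β) (hω : ω < 0) (hC : 0 < C)
    (L : ℝ → ℝ → ℝ)
    (h : ∀ lam ≤ lam₀, ∃ L' L'' : ℝ → ℝ,
      (∀ x ∈ Icc α β, HasDerivWithinAt (L lam) (L' x) (Icc α β) x) ∧
      (∀ x ∈ Icc α β, HasDerivWithinAt L' (L'' x) (Icc α β) x) ∧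
      ContinuousOn L'' (Icc α β) ∧
      (∀ x ∈ Icc α β, 0 < L lam x) ∧
      (∀ x ∈ Icc α β, -(L'' x) = lam * L lam x + ω * L lam x ^ 2) ∧
      L lam α ≤ C ∧ L lam β ≤ C) :
    Filter.Tendsto
      (fun lam => ∫ x in α..β, L lam x * Real.sin (Real.pi * (x - α) / (β - α)))
      Filter.atBot (nhds 0) :=
  stmt_19_general α β ω lam₀ C hab hω L h
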